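/- Let $y_1,y_2,y_3$ be vectors in Minkowski space with $y_1^2\neq 0$ and $y_2^2\neq 0$. If $\det_{y_1,y_2,y_3}=0$, $\det_{y_1,y_2}=0$, and additionally $\det_{y_1,y_3}=0$ or $\det_{y_2,y_3}=0$, then the set $\{y_1,y_2,y_3\}$ is linearly dependent. -/
import Mathlib


/-- Minkowski inner product on `ℝ^{1,3}` with signature `(+,-,-,-)`. -/
noncomputable def mink (x y : Fin 4 → ℝ) : ℝ :=
  x 0 * y 0 - x 1 * y 1 - x 2 * y 2 - x 3 * y 3

/-- `2×2` Gram determinant `det_{a,b} = a²b² − (ab)²`. -/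
noncomputable def gram2 (a b : Fin 4 → ℝ) : ℝ := mink a a * mink b b - (mink a b) ^ 2

/-- `3×3` Gram determinant of the Minkowski inner products. -/
noncomputable def gram3 (y1 y2 y3 : Fin 4 → ℝ) : ℝ :=
  mink y1 y1 * mink y2 y2 * mink y3 y3
    - mink y1 y1 * (mink y2 y3) ^ 2 - mink y2 y2 * (mink y1 y3) ^ 2
    - mink y3 y3 * (mink y1 y2) ^ 2
    + 2 * mink y1 y2 * mink y1 y3 * mink y2 y3

/-- Cofactor `Λ_k` of `(y_i y_j)`: `Λ_k = (y_i y_k)(y_j y_k) − y_k²(y_i y_j)`. -/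
noncomputable def Lam (yi yj yk : Fin 4 → ℝ) : ℝ :=
  mink yi yk * mink yj yk - mink yk yk * mink yi yj

lemma mink_comm (x y : Fin 4 → ℝ) : mink x y = mink y x := by
  simp only [mink]; ring

lemma mink_expand (a b c d : ℝ) (x y z w : Fin 4 → ℝ) :
    mink (fun i => a * x i + b * y i) (fun i => c * z i + d * w i)
      = a * c * mink x z + a * d * mink x w + b * c * mink y z + b * d * mink y w := by
  simp only [mink]; ring

/-- orthogonal lightlike vectors are proportional -/
lemma light_prop (u w : Fin 4 → ℝ) (hu : mink u u = 0) (hw : mink w w = 0)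
    (huw : mink u w = 0) (hne : u ≠ 0) : ∃ c : ℝ, ∀ i, w i = c * u i := by
  simp only [mink] at hu hw huw
  have hS : (u 1 * w 2 - u 2 * w 1) ^ 2 + (u 1 * w 3 - u 3 * w 1) ^ 2
      + (u 2 * w 3 - u 3 * w 2) ^ 2 = 0 := by
    linear_combination (-(w 1 ^ 2 + w 2 ^ 2 + w 3 ^ 2)) * hu + (-(u 0 ^ 2)) * hw
      + (u 0 * w 0 + u 1 * w 1 + u 2 * w 2 + u 3 * w 3) * huw
  have s1 := sq_nonneg (u 1 * w 2 - u 2 * w 1)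
  have s2 := sq_nonneg (u 1 * w 3 - u 3 * w 1)
  have s3 := sq_nonneg (u 2 * w 3 - u 3 * w 2)
  have m12 : u 1 * w 2 - u 2 * w 1 = 0 := by
    have h : (u 1 * w 2 - u 2 * w 1) ^ 2 = 0 := by linarith
    exact sq_eq_zero_iff.mp h
  have m13 : u 1 * w 3 - u 3 * w 1 = 0 := by
    have h : (u 1 * w 3 - u 3 * w 1) ^ 2 = 0 := by linarith
    exact sq_eq_zero_iff.mp h
  have m23 : u 2 * w 3 - u 3 * w 2 = 0 := by
    have h : (u 2 * w 3 - u 3 * w 2) ^ 2 = 0 := by linarith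
    exact sq_eq_zero_iff.mp h
  have hu0 : u 0 ≠ 0 := by
    intro h0
    apply hne
    have hsz : u 1 * u 1 + u 2 * u 2 + u 3 * u 3 = 0 := by
      linear_combination (u 0) * h0 - hu
    have n1 := mul_self_nonneg (u 1)
    have n2 := mul_self_nonneg (u 2)
    have n3 := mul_self_nonneg (u 3)
    have q1 : u 1 = 0 := mul_self_eq_zero.mp (by linarith)
    have q2 : u 2 = 0 := mul_self_eq_zero.mp (by linarith)
    have q3 : u 3 = 0 := mul_self_eq_zero.mp (by linarith)
    funext i
    fin_cases i
    · exact h0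
    · exact q1
    · exact q2
    · exact q3
  refine ⟨w 0 / u 0, fun i => ?_⟩
  have t1 : u 0 * w 1 - u 1 * w 0 = 0 := by
    have h : (u 0 * w 1 - u 1 * w 0) ^ 2 = 0 := by
      linear_combination (w 1 ^ 2) * hu + (u 1 ^ 2) * hw - 2 * (u 1 * w 1) * huw
        + (u 1 * w 2 - u 2 * w 1) * m12 + (u 1 * w 3 - u 3 * w 1) * m13
    exact sq_eq_zero_iff.mp h
  have t2 : u 0 * w 2 - u 2 * w 0 = 0 := by
    have h : (u 0 * w 2 - u 2 * w 0) ^ 2 = 0 := by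
      linear_combination (w 2 ^ 2) * hu + (u 2 ^ 2) * hw - 2 * (u 2 * w 2) * huw
        + (u 1 * w 2 - u 2 * w 1) * m12 + (u 2 * w 3 - u 3 * w 2) * m23
    exact sq_eq_zero_iff.mp h
  have t3 : u 0 * w 3 - u 3 * w 0 = 0 := by
    have h : (u 0 * w 3 - u 3 * w 0) ^ 2 = 0 := by
      linear_combination (w 3 ^ 2) * hu + (u 3 ^ 2) * hw - 2 * (u 3 * w 3) * huw
        + (u 1 * w 3 - u 3 * w 1) * m13 + (u 2 * w 3 - u 3 * w 2) * m23
    exact sq_eq_zero_iff.mp h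
  have key : u 0 * w i = w 0 * u i := by
    fin_cases i
    · show u 0 * w 0 = w 0 * u 0; ring
    · show u 0 * w 1 = w 0 * u 1; linarith
    · show u 0 * w 2 = w 0 * u 2; linarith
    · show u 0 * w 3 = w 0 * u 3; linarith
  field_simp
  linarith

lemma not_li_of_combo (y1 y2 y3 : Fin 4 → ℝ) (a b c : ℝ)
    (h : ∀ i, a * y1 i + b * y2 i + c * y3 i = 0)
    (hne : ¬(a = 0 ∧ b = 0 ∧ c = 0)) :
    ¬ LinearIndependent ℝ ![y1, y2, y3] := by
  intro hLI
  have hsum : ∑ i, (![a, b, c] : Fin 3 → ℝ) i • (![y1, y2, y3] : Fin 3 → Fin 4 → ℝ) i = 0 := by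
    funext j
    have hj := h j
    simp only [Fin.sum_univ_three, Finset.sum_apply, Pi.smul_apply, smul_eq_mul,
      Pi.zero_apply, Matrix.cons_val_zero, Matrix.cons_val_one, Matrix.head_cons,
      Matrix.cons_val_two, Matrix.tail_cons]
    linarith
  have hz := Fintype.linearIndependent_iff.mp hLI ![a, b, c] hsum
  refine hne ⟨?_, ?_, ?_⟩
  · simpa using hz 0
  · simpa using hz 1
  · simpa using hz 2

/-- If `y1² ≠ 0`, `y2² ≠ 0`, `det_{y1,y2,y3} = det_{y1,y2} = 0` and additionally
`det_{y1,y3} = 0` or `det_{y2,y3} = 0`, then `{y1,y2,y3}` is linearly dependent. -/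
theorem gram_zero_lin_dep (y1 y2 y3 : Fin 4 → ℝ)
    (h1 : mink y1 y1 ≠ 0) (h2 : mink y2 y2 ≠ 0)
    (h3 : gram3 y1 y2 y3 = 0) (h12 : gram2 y1 y2 = 0)
    (h' : gram2 y1 y3 = 0 ∨ gram2 y2 y3 = 0) :
    ¬ LinearIndependent ℝ ![y1, y2, y3] := by
  simp only [gram3, gram2] at h3 h12 h'
  rcases h' with h13 | h23
  · -- case det_{y1,y3} = 0
    have hAR : mink y1 y1 * mink y2 y3 - mink y1 y2 * mink y1 y3 = 0 := by
      have hsq : (mink y1 y1 * mink y2 y3 - mink y1 y2 * mink y1 y3) ^ 2 = 0 := by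
        linear_combination (mink y1 y1 * mink y3 y3 - (mink y1 y3) ^ 2) * h12
          - mink y1 y1 * h3
      exact sq_eq_zero_iff.mp hsq
    have hu : mink (fun i => mink y1 y1 * y2 i + (-(mink y1 y2)) * y1 i)
        (fun i => mink y1 y1 * y2 i + (-(mink y1 y2)) * y1 i) = 0 := by
      rw [mink_expand, mink_comm y2 y1]
      linear_combination mink y1 y1 * h12
    have hw : mink (fun i => mink y1 y1 * y3 i + (-(mink y1 y3)) * y1 i)
        (fun i => mink y1 y1 * y3 i + (-(mink y1 y3)) * y1 i) = 0 := by
      rw [mink_expand, mink_comm y3 y1]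
      linear_combination mink y1 y1 * h13
    have huw : mink (fun i => mink y1 y1 * y2 i + (-(mink y1 y2)) * y1 i)
        (fun i => mink y1 y1 * y3 i + (-(mink y1 y3)) * y1 i) = 0 := by
      rw [mink_expand, mink_comm y2 y1]
      linear_combination mink y1 y1 * hAR
    by_cases hun : (fun i => mink y1 y1 * y2 i + (-(mink y1 y2)) * y1 i) = (0 : Fin 4 → ℝ)
    · refine not_li_of_combo y1 y2 y3 (-(mink y1 y2)) (mink y1 y1) 0 (fun i => ?_)
        (fun ⟨_, hA0, _⟩ => h1 hA0)
      have := congrFun hun i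
      simp only [Pi.zero_apply] at this
      linarith
    · obtain ⟨c, hc⟩ := light_prop _ _ hu hw huw hun
      refine not_li_of_combo y1 y2 y3 (c * mink y1 y2 - mink y1 y3) (-(c * mink y1 y1))
        (mink y1 y1) (fun i => ?_) (fun ⟨_, _, hA0⟩ => h1 hA0)
      have := hc i
      linarith
  · -- case det_{y2,y3} = 0
    have hBQ : mink y2 y2 * mink y1 y3 - mink y1 y2 * mink y2 y3 = 0 := by
      have hsq : (mink y2 y2 * mink y1 y3 - mink y1 y2 * mink y2 y3) ^ 2 = 0 := by
        linear_combination (mink y2 y2 * mink y3 y3 - (mink y2 y3) ^ 2) * h12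
          - mink y2 y2 * h3
      exact sq_eq_zero_iff.mp hsq
    have hu : mink (fun i => mink y2 y2 * y1 i + (-(mink y1 y2)) * y2 i)
        (fun i => mink y2 y2 * y1 i + (-(mink y1 y2)) * y2 i) = 0 := by
      rw [mink_expand, mink_comm y2 y1]
      linear_combination mink y2 y2 * h12
    have hw : mink (fun i => mink y2 y2 * y3 i + (-(mink y2 y3)) * y2 i)
        (fun i => mink y2 y2 * y3 i + (-(mink y2 y3)) * y2 i) = 0 := by
      rw [mink_expand, mink_comm y3 y2]
      linear_combination mink y2 y2 * h23
    have huw : mink (fun i => mink y2 y2 * y1 i + (-(mink y1 y2)) * y2 i)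
        (fun i => mink y2 y2 * y3 i + (-(mink y2 y3)) * y2 i) = 0 := by
      rw [mink_expand]
      linear_combination mink y2 y2 * hBQ
    by_cases hun : (fun i => mink y2 y2 * y1 i + (-(mink y1 y2)) * y2 i) = (0 : Fin 4 → ℝ)
    · refine not_li_of_combo y1 y2 y3 (mink y2 y2) (-(mink y1 y2)) 0 (fun i => ?_)
        (fun ⟨hB0, _, _⟩ => h2 hB0)
      have := congrFun hun i
      simp only [Pi.zero_apply] at this
      linarith
    · obtain ⟨c, hc⟩ := light_prop _ _ hu hw huw hun
      refine not_li_of_combo y1 y2 y3 (-(c * mink y2 y2)) (c * mink y1 y2 - mink y2 y3)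
        (mink y2 y2) (fun i => ?_) (fun ⟨_, _, hB0⟩ => h2 hB0)
      have := hc i
      linarith
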